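/- Let m : [0,∞) → ℝ be a weakly increasing function with m(y)/log(y) → 1 as y → ∞. Let (Y(1),Y(0)) have joint distribution P on [0,∞)² with E[|log Y(d)| | Y(d)>0] < ∞ for d=0,1. Then as a → ∞, E_P[m(aY(1)) − m(aY(0))] = (P(Y(1)>0) − P(Y(0)>0))·log(a) + o(log(a)); equivalently, E_P[m(aY(1)) − m(aY(0))] / log(a) → P(Y(1)>0) − P(Y(0)>0) as a → ∞. -/

import Mathlib

/-!
Since `m(y) ~ log y`, for every `y > 0` we have `m(a y) / log a → 1`, while for `y = 0` the
quotient `m(0) / log a` tends to `0`; so `m(a Y) / log a` converges pointwise to the indicator of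
`{Y > 0}`. Monotonicity bounds `m` on compact pieces of `[0, ∞)`, which together with `m = O(log)`
gives `|m(a Y)| / log a ≤ C + c + c |log Y|` for large `a`, an integrable majorant. Dominated
convergence then yields `E[m(a Y)] / log a → P(Y > 0)` for each of `Y(1)` and `Y(0)`.
-/

open MeasureTheory Filter Set Real Asymptotics Topology

lemma Real.abs_log_mul_le (x y : ℝ) : |log (x * y)| ≤ |log x| + |log y| := by
  rcases eq_or_ne x 0 with rfl | hx
  · simp
  rcases eq_or_ne y 0 with rfl | hy
  · simp
  rw [log_mul hx hy]
  exact abs_add_le _ _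

section LogLike

variable {m : ℝ → ℝ}

lemma MonotoneOn.exists_abs_le_add_mul_abs_log (hmono : MonotoneOn m (Ici 0))
    (hm : m =O[atTop] log) :
    ∃ C c : ℝ, 0 ≤ C ∧ 0 ≤ c ∧ ∀ y, 0 ≤ y → |m y| ≤ C + c * |log y| := by
  obtain ⟨c, hc, hO⟩ := hm.exists_pos
  obtain ⟨y₀, hy₀⟩ := eventually_atTop.1 hO.bound
  set y₁ := max y₀ 0
  refine ⟨|m 0| + |m y₁|, c, by positivity, hc.le, fun y hy => ?_⟩
  have hlog : 0 ≤ c * |log y| := by positivity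
  rcases le_total y₁ y with hy₁ | hy₁
  · have := hy₀ y ((le_max_left _ _).trans hy₁)
    rw [norm_eq_abs, norm_eq_abs] at this
    linarith [abs_nonneg (m 0), abs_nonneg (m y₁)]
  · have h0 : m 0 ≤ m y := hmono self_mem_Ici hy hy
    have h1 : m y ≤ m y₁ := hmono hy (le_max_right y₀ 0) hy₁
    rw [abs_le]
    constructor <;> linarith [neg_abs_le (m 0), le_abs_self (m y₁), abs_nonneg (m 0),
      abs_nonneg (m y₁)]

lemma abs_comp_mul_le {C c : ℝ} (hc : 0 ≤ c)
    (hbound : ∀ y, 0 ≤ y → |m y| ≤ C + c * |log y|) {a y : ℝ} (ha : 0 ≤ a)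
    (hy : 0 ≤ y) :
    |m (a * y)| ≤ C + c * |log a| + c * |log y| :=
  calc |m (a * y)| ≤ C + c * |log (a * y)| := hbound _ (mul_nonneg ha hy)
    _ ≤ C + c * (|log a| + |log y|) := by gcongr; exact abs_log_mul_le a y
    _ = C + c * |log a| + c * |log y| := by ring

lemma tendsto_comp_mul_div_log (hm : m ~[atTop] log) {y : ℝ} (hy : 0 < y) :
    Tendsto (fun a => m (a * y) / log a) atTop (𝓝 1) := by
  have hlog : (fun a => log (a * y)) ~[atTop] log := by
    refine (IsEquivalent.refl.add_const_of_norm_tendsto_atTop (c := log y)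
      (tendsto_norm_atTop_atTop.comp tendsto_log_atTop)).congr_left ?_
    filter_upwards [eventually_gt_atTop 0] with a ha
    rw [log_mul ha.ne' hy.ne']
  refine (isEquivalent_iff_tendsto_one ?_).1
    ((hm.comp_tendsto (tendsto_id.atTop_mul_const hy)).trans hlog)
  filter_upwards [eventually_gt_atTop 1] with a ha
  exact (log_pos ha).ne'

lemma tendsto_comp_mul_div_log_indicator (hm : m ~[atTop] log) {y : ℝ} (hy : 0 ≤ y) :
    Tendsto (fun a => m (a * y) / log a) atTop (𝓝 ((Ioi 0).indicator 1 y)) := by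
  rcases hy.eq_or_lt with rfl | hy
  · simpa using tendsto_const_nhds.div_atTop tendsto_log_atTop
  · simpa [hy] using tendsto_comp_mul_div_log hm hy

end LogLike

section Expectation

variable {Ω : Type*} [MeasurableSpace Ω] {μ : Measure Ω} {Y : Ω → ℝ} {m : ℝ → ℝ}

lemma MonotoneOn.measurable_comp_of_nonneg (hmono : MonotoneOn m (Ici 0)) (hY : Measurable Y)
    (hY0 : ∀ ω, 0 ≤ Y ω) : Measurable fun ω => m (Y ω) := by
  have hext : Monotone fun y => m (max y 0) := fun x z hxz =>
    hmono (le_max_right x 0) (le_max_right z 0) (max_le_max_right 0 hxz)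
  simpa [Function.comp_def, hY0] using hext.measurable.comp hY

lemma integrable_log_of_integrableOn_pos (hY0 : ∀ ω, 0 ≤ Y ω)
    (h : IntegrableOn (fun ω => log (Y ω)) {ω | 0 < Y ω} μ) :
    Integrable (fun ω => log (Y ω)) μ :=
  h.integrable_of_forall_notMem_eq_zero fun ω hω => by
    rw [le_antisymm (not_lt.1 hω) (hY0 ω), log_zero]

variable [IsFiniteMeasure μ]

lemma integrable_comp_mul (hmono : MonotoneOn m (Ici 0)) (hm : m =O[atTop] log)
    (hY : Measurable Y) (hY0 : ∀ ω, 0 ≤ Y ω) (hlogY : Integrable (fun ω => log (Y ω)) μ)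
    {a : ℝ} (ha : 0 ≤ a) : Integrable (fun ω => m (a * Y ω)) μ := by
  obtain ⟨C, c, -, hc, hbound⟩ := hmono.exists_abs_le_add_mul_abs_log hm
  have hmeas := hmono.measurable_comp_of_nonneg (hY.const_mul a) fun ω => mul_nonneg ha (hY0 ω)
  refine Integrable.mono' ((integrable_const (C + c * |log a|)).add (hlogY.abs.const_mul c))
    hmeas.aestronglyMeasurable (ae_of_all _ fun ω => ?_)
  simpa only [Pi.add_apply, add_assoc, norm_eq_abs] using abs_comp_mul_le hc hbound ha (hY0 ω)

theorem tendsto_integral_comp_mul_div_log (hmono : MonotoneOn m (Ici 0))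
    (hm : m ~[atTop] log) (hY : Measurable Y) (hY0 : ∀ ω, 0 ≤ Y ω)
    (hlogY : Integrable (fun ω => log (Y ω)) μ) :
    Tendsto (fun a => (∫ ω, m (a * Y ω) ∂μ) / log a) atTop (𝓝 (μ.real {ω | 0 < Y ω})) := by
  obtain ⟨C, c, hC, hc, hbound⟩ := hmono.exists_abs_le_add_mul_abs_log hm.isBigO
  have hlim := tendsto_integral_filter_of_dominated_convergence (μ := μ)
    (F := fun a ω => m (a * Y ω) / log a) (f := (Y ⁻¹' Ioi 0).indicator 1)
    (fun ω => C + c + c * |log (Y ω)|) ?_ ?_ ((integrable_const _).add (hlogY.abs.const_mul c))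
    (ae_of_all _ fun ω => tendsto_comp_mul_div_log_indicator hm (hY0 ω))
  · simp only [integral_div, integral_indicator_one (hY measurableSet_Ioi)] at hlim
    exact hlim
  · filter_upwards [eventually_ge_atTop 0] with a ha
    exact ((hmono.measurable_comp_of_nonneg (hY.const_mul a)
      fun ω => mul_nonneg ha (hY0 ω)).div_const _).aestronglyMeasurable
  · filter_upwards [eventually_ge_atTop 0, tendsto_log_atTop.eventually_ge_atTop 1]
      with a ha hla
    refine ae_of_all _ fun ω => ?_
    have hla0 : 0 < log a := by linarith
    have hma := abs_comp_mul_le hc hbound ha (hY0 ω)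
    rw [abs_of_pos hla0] at hma
    rw [norm_div, norm_eq_abs, norm_eq_abs, abs_of_pos hla0, div_le_iff₀ hla0]
    nlinarith [mul_nonneg hC (sub_nonneg.2 hla),
      mul_nonneg (mul_nonneg hc (abs_nonneg (log (Y ω)))) (sub_nonneg.2 hla)]

end Expectation

/-- Chen–Roth, Proposition A.2 / eqn (2): for a weakly increasing `m`
with `m(y)/log y → 1`, as `a → ∞`,
`E[m(aY(1)) - m(aY(0))] / log a → P(Y(1)>0) - P(Y(0)>0)`. -/
theorem stmt_1
    {Ω : Type*} [MeasurableSpace Ω] (μ : Measure Ω) [IsProbabilityMeasure μ]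
    (Y1 Y0 : Ω → ℝ) (hY1meas : Measurable Y1) (hY0meas : Measurable Y0)
    (hY1nonneg : ∀ ω, 0 ≤ Y1 ω) (hY0nonneg : ∀ ω, 0 ≤ Y0 ω)
    (m : ℝ → ℝ)
    (hm_mono : MonotoneOn m (Ici 0))
    (hm_loglike : Tendsto (fun y => m y / Real.log y) atTop (nhds 1))
    -- E[|log Y(d)| ∣ Y(d) > 0] < ∞ for d = 0,1
    (hint1 : IntegrableOn (fun ω => Real.log (Y1 ω)) {ω | 0 < Y1 ω} μ)
    (hint0 : IntegrableOn (fun ω => Real.log (Y0 ω)) {ω | 0 < Y0 ω} μ) :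
    Tendsto (fun a => (∫ ω, (m (a * Y1 ω) - m (a * Y0 ω)) ∂μ) / Real.log a)
      atTop (nhds ((μ {ω | 0 < Y1 ω}).toReal - (μ {ω | 0 < Y0 ω}).toReal)) := by
  have hm : m ~[atTop] log := isEquivalent_of_tendsto_one hm_loglike
  have hlog1 := integrable_log_of_integrableOn_pos hY1nonneg hint1
  have hlog0 := integrable_log_of_integrableOn_pos hY0nonneg hint0
  refine ((tendsto_integral_comp_mul_div_log hm_mono hm hY1meas hY1nonneg hlog1).sub
    (tendsto_integral_comp_mul_div_log hm_mono hm hY0meas hY0nonneg hlog0)).congr' ?_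
  filter_upwards [eventually_ge_atTop 0] with a ha
  rw [integral_sub (integrable_comp_mul hm_mono hm.isBigO hY1meas hY1nonneg hlog1 ha)
    (integrable_comp_mul hm_mono hm.isBigO hY0meas hY0nonneg hlog0 ha), sub_div]
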